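/- Let q be an odd prime power, let ν be a nonsquare in F_q, and let Γ ∈ PGL₂(F_q) be the class of [[0,ν],[1,0]]. Then the centralizer of Γ in PGL₂(F_q) consists exactly of the classes of matrices [[a,bν],[b,a]] with a² ≠ νb² together with the classes of matrices [[−a,−bν],[b,a]] with a² ≠ νb². -/
import Mathlib


open Matrix

/-- Let `q` be an odd prime power, `F` the field with `q` elements, `ν ∈ F` a nonsquare,
and let `Γ ∈ PGL₂(F)` be the class of `A = [[0,ν],[1,0]]`.  An element of `PGL₂(F)`,
represented by `Φ ∈ GL₂(F)`, centralizes `Γ` (i.e. `ΦA` and `AΦ` agree up to a scalar)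
if and only if `Φ` is a scalar multiple of a matrix `[[a,bν],[b,a]]` with `a² ≠ νb²` or
of a matrix `[[−a,−bν],[b,a]]` with `a² ≠ νb²`. -/
theorem centralizer_of_twisted_involution
    {F : Type*} [Field F] [Fintype F] (q : ℕ) (hq : Fintype.card F = q)
    (hodd : Odd q) (ν : F) (hν : ¬ IsSquare ν) (Φ : GL (Fin 2) F) :
    (∃ c : Fˣ, (Φ : Matrix (Fin 2) (Fin 2) F) * !![0, ν; 1, 0] =
        (c : F) • (!![0, ν; 1, 0] * (Φ : Matrix (Fin 2) (Fin 2) F))) ↔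
    (∃ a b : F, a ^ 2 ≠ ν * b ^ 2 ∧ ∃ c : Fˣ,
      ((Φ : Matrix (Fin 2) (Fin 2) F) = (c : F) • !![a, b * ν; b, a] ∨
       (Φ : Matrix (Fin 2) (Fin 2) F) = (c : F) • !![-a, -(b * ν); b, a])) := by
  set M : Matrix (Fin 2) (Fin 2) F := (Φ : Matrix (Fin 2) (Fin 2) F) with hM
  have hdet : M.det ≠ 0 := by
    have : IsUnit M := ⟨Φ, rfl⟩
    exact ((Matrix.isUnit_iff_isUnit_det M).mp this).ne_zero
  have hdet2 : M 0 0 * M 1 1 - M 0 1 * M 1 0 ≠ 0 := by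
    rwa [Matrix.det_fin_two] at hdet
  constructor
  · rintro ⟨c, hc⟩
    have h00 := congrFun (congrFun hc 0) 0
    have h01 := congrFun (congrFun hc 0) 1
    have h10 := congrFun (congrFun hc 1) 0
    have h11 := congrFun (congrFun hc 1) 1
    simp [Matrix.mul_apply, Matrix.vecMul, dotProduct, Fin.sum_univ_two] at h00 h01 h10 h11
    -- h00 : M 0 1 = c * (ν * M 1 0)
    -- h01 : M 0 0 * ν = c * (ν * M 1 1)
    -- h10 : M 1 1 = c * M 0 0
    -- h11 : M 1 0 * ν = c * M 0 1
    have hν0 : ν ≠ 0 := fun h => hν ⟨0, by simp [h]⟩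
    have hc2 : (c : F) ^ 2 = 1 := by
      by_contra hc2
      have hs : (c : F) ^ 2 - 1 ≠ 0 := sub_ne_zero.mpr hc2
      have e00 : ν * (((c : F) ^ 2 - 1) * M 0 0) = 0 := by
        linear_combination -h01 - (c : F) * ν * h10
      have e10 : ν * (((c : F) ^ 2 - 1) * M 1 0) = 0 := by
        linear_combination -h11 - (c : F) * h00
      have hM00 : M 0 0 = 0 := by
        rcases mul_eq_zero.mp e00 with h | h
        · exact absurd h hν0
        · rcases mul_eq_zero.mp h with h | h
          · exact absurd h hs
          · exact h
      have hM10 : M 1 0 = 0 := by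
        rcases mul_eq_zero.mp e10 with h | h
        · exact absurd h hν0
        · rcases mul_eq_zero.mp h with h | h
          · exact absurd h hs
          · exact h
      apply hdet2
      rw [hM00, hM10]
      ring
    have hc1 : (c : F) = 1 ∨ (c : F) = -1 := by
      have h0 : ((c : F) - 1) * ((c : F) + 1) = 0 := by linear_combination hc2
      rcases mul_eq_zero.mp h0 with h | h
      · exact Or.inl (sub_eq_zero.mp h)
      · exact Or.inr (eq_neg_of_add_eq_zero_left h)
    rcases hc1 with h1 | h1
    · have ha : M 1 1 = M 0 0 := by rw [h10, h1, one_mul]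
      have hb : M 0 1 = M 1 0 * ν := by rw [h00, h1]; ring
      refine ⟨M 0 0, M 1 0, ?_, 1, Or.inl ?_⟩
      · intro h
        apply hdet2
        rw [ha, hb]
        linear_combination h
      · ext i j
        fin_cases i <;> fin_cases j <;> simp [ha, hb]
    · have ha : M 0 0 = -(M 1 1) := by rw [h10, h1]; ring
      have hb : M 0 1 = -(M 1 0 * ν) := by rw [h00, h1]; ring
      refine ⟨M 1 1, M 1 0, ?_, 1, Or.inr ?_⟩
      · intro h
        apply hdet2
        rw [ha, hb]
        linear_combination -h
      · ext i j
        fin_cases i <;> fin_cases j <;> simp [ha, hb]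
  · rintro ⟨a, b, hab, c, h | h⟩
    · refine ⟨1, ?_⟩
      rw [h]
      ext i j
      fin_cases i <;> fin_cases j <;>
        simp [Matrix.mul_apply, Fin.sum_univ_two] <;> ring
    · refine ⟨-1, ?_⟩
      rw [h]
      ext i j
      fin_cases i <;> fin_cases j <;>
        simp [Matrix.mul_apply, Fin.sum_univ_two] <;> ring
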